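/- arXiv:2006.01482 — 4 statements merged into one kernel-verified Lean document; each statement's English description precedes it below -/
import Mathlib

section
/- QTRAN condition recovery: Define Q(o,a) = ∑_{i=1}^N Q_i(o_i,a_i) + log det(B_Yᵀ B_Y) where each ‖b_i‖ ≤ 1. Let a* = (argmax_{a_i} Q_i(o_i,a_i))_i and suppose det(B_{Y*}ᵀ B_{Y*}) = 1 for the features at a*. Then for every joint action a: ∑_i Q_i(o_i,a_i) − Q(o,a) + V(o) ≥ 0, with equality when a = a*, where V(o) = max_a Q(o,a) − ∑_i Q_i(o_i,a_i*). -/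
open scoped RealInnerProductSpace

/-- Sum of eigenvalues of a Hermitian real matrix equals its trace. -/
lemma sum_eigenvalues_eq_trace {N : ℕ} {G : Matrix (Fin N) (Fin N) ℝ}
    (hH : G.IsHermitian) : ∑ i, hH.eigenvalues i = G.trace := by
  conv_rhs => rw [hH.spectral_theorem]
  rw [Unitary.conjStarAlgAut_apply, Matrix.trace_mul_comm, ← mul_assoc,
    (Matrix.mem_unitaryGroup_iff'.mp (hH.eigenvectorUnitary).2), one_mul,
    Matrix.trace_diagonal]
  simp

/-- Hadamard-type bound via AM-GM: a PSD matrix with diagonal entries at most 1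
has determinant at most 1. -/
lemma det_le_one_of_posSemidef {N : ℕ} {G : Matrix (Fin N) (Fin N) ℝ}
    (hG : G.PosSemidef) (hdiag : ∀ i, G i i ≤ 1) : G.det ≤ 1 := by
  rcases Nat.eq_zero_or_pos N with hN | hN
  · subst hN; simp [Matrix.det_fin_zero]
  have hH := hG.1
  have hev : ∀ i, 0 ≤ hH.eigenvalues i := hG.eigenvalues_nonneg
  have hdet : G.det = ∏ i, hH.eigenvalues i := by
    have := hH.det_eq_prod_eigenvalues
    push_cast at this
    exact this
  have htr : ∑ i, hH.eigenvalues i ≤ N := by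
    rw [sum_eigenvalues_eq_trace hH, Matrix.trace]
    calc ∑ i, G.diag i ≤ ∑ _i : Fin N, (1 : ℝ) := Finset.sum_le_sum fun i _ => hdiag i
    _ = N := by simp
  have hNpos : (0 : ℝ) < N := by exact_mod_cast hN
  have hamgm := Real.geom_mean_le_arith_mean (Finset.univ : Finset (Fin N))
      (fun _ => (1 : ℝ)) (fun i => hH.eigenvalues i)
      (fun i _ => zero_le_one) (by simp [hNpos]) (fun i _ => hev i)
  simp only [Real.rpow_one, Finset.sum_const, Finset.card_univ, Fintype.card_fin,
    nsmul_eq_mul, mul_one, one_mul] at hamgm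
  have hle : ((∏ i, hH.eigenvalues i) ^ ((N : ℝ))⁻¹ : ℝ) ≤ 1 := by
    refine hamgm.trans ?_
    rw [div_le_one hNpos]
    exact htr
  have hprod : (0 : ℝ) ≤ ∏ i, hH.eigenvalues i :=
    Finset.prod_nonneg fun i _ => hev i
  have : ((∏ i, hH.eigenvalues i) ^ ((N : ℝ))⁻¹ : ℝ) ^ (N : ℝ) ≤ 1 ^ (N : ℝ) :=
    Real.rpow_le_rpow (Real.rpow_nonneg hprod _) hle (le_of_lt hNpos)
  rwa [← Real.rpow_mul hprod, inv_mul_cancel₀ (ne_of_gt hNpos), Real.rpow_one,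
    Real.one_rpow, ← hdet] at this

/-- The Gram matrix of vectors in Euclidean space is positive semidefinite. -/
lemma gram_posSemidef {N P : ℕ} (v : Fin N → EuclideanSpace ℝ (Fin P)) :
    (Matrix.of fun i j : Fin N => ⟪v i, v j⟫).PosSemidef := by
  have : (Matrix.of fun i j : Fin N => ⟪v i, v j⟫) =
      (Matrix.of fun (p : Fin P) (i : Fin N) => v i p).conjTranspose *
      (Matrix.of fun (p : Fin P) (i : Fin N) => v i p) := by
    ext i j
    simp [Matrix.mul_apply, PiLp.inner_apply]
    exact Finset.sum_congr rfl fun _ _ => mul_comm _ _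
  rw [this]
  exact Matrix.posSemidef_conjTranspose_mul_self _

/-- QTRAN condition recovery: with `Q(a) = ∑ᵢ Qᵢ(aᵢ) + log det(B_aᵀ B_a)`,
unit-bounded diversity features, `a*` the profile of individual maximizers,
Gram determinant 1 at `a*`, and `V = max_a Q(a) − ∑ᵢ Qᵢ(aᵢ*)`, one has
`∑ᵢ Qᵢ(aᵢ) − Q(a) + V ≥ 0` for every `a`, with equality at `a = a*`. -/
theorem qtran_condition_recovery
    (N P : ℕ) (A : Type) [Fintype A] [Nonempty A]
    (Qi : Fin N → A → ℝ) (b : (Fin N → A) → Fin N → EuclideanSpace ℝ (Fin P))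
    (hb : ∀ a i, ‖b a i‖ ≤ 1)
    (Q : (Fin N → A) → ℝ)
    (hQ : ∀ a, Q a = ∑ i, Qi i (a i) +
        Real.log (Matrix.of fun i j : Fin N => ⟪b a i, b a j⟫).det)
    (astar : Fin N → A) (hastar : ∀ i a, Qi i a ≤ Qi i (astar i))
    (hdet1 : (Matrix.of fun i j : Fin N => ⟪b astar i, b astar j⟫).det = 1)
    (V : ℝ)
    (hV : V = (Finset.univ.sup' Finset.univ_nonempty Q) - ∑ i, Qi i (astar i)) :
    (∀ a, 0 ≤ ∑ i, Qi i (a i) - Q a + V) ∧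
      ∑ i, Qi i (astar i) - Q astar + V = 0 := by
  -- log det of each Gram matrix is nonpositive
  have hlog : ∀ a, Real.log (Matrix.of fun i j : Fin N => ⟪b a i, b a j⟫).det ≤ 0 := by
    intro a
    have hpsd := gram_posSemidef (b a)
    have hdiag : ∀ i, (Matrix.of fun i j : Fin N => ⟪b a i, b a j⟫) i i ≤ 1 := by
      intro i
      simp only [Matrix.of_apply, real_inner_self_eq_norm_sq]
      calc ‖b a i‖ ^ 2 ≤ 1 ^ 2 := by
            exact pow_le_pow_left₀ (norm_nonneg _) (hb a i) 2
        _ = 1 := one_pow 2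
    have hdetnn : 0 ≤ (Matrix.of fun i j : Fin N => ⟪b a i, b a j⟫).det := by
      have := hpsd.1.det_eq_prod_eigenvalues
      push_cast at this
      rw [this]
      exact Finset.prod_nonneg fun i _ => hpsd.eigenvalues_nonneg i
    exact Real.log_nonpos hdetnn (det_le_one_of_posSemidef hpsd hdiag)
  -- Q astar equals the sum of individual maxima
  have hQstar : Q astar = ∑ i, Qi i (astar i) := by
    rw [hQ, hdet1, Real.log_one, add_zero]
  -- Q a ≤ ∑ Qi (astar i) for all a
  have hle : ∀ a, Q a ≤ ∑ i, Qi i (astar i) := by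
    intro a
    rw [hQ]
    have h1 : ∑ i, Qi i (a i) ≤ ∑ i, Qi i (astar i) :=
      Finset.sum_le_sum fun i _ => hastar i (a i)
    linarith [hlog a]
  -- the sup of Q equals ∑ Qi (astar i), hence V = 0
  have hsup : (Finset.univ.sup' Finset.univ_nonempty Q) = ∑ i, Qi i (astar i) := by
    apply le_antisymm
    · exact Finset.sup'_le _ _ fun a _ => hle a
    · rw [← hQstar]
      exact Finset.le_sup' Q (Finset.mem_univ astar)
  have hV0 : V = 0 := by rw [hV, hsup, sub_self]
  constructor
  · intro a
    rw [hV0, hQ]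
    linarith [hlog a]
  · rw [hV0, hQstar]
    ring
end

section
/- Under the Q-DPP decomposition with det(B_Yᵀ B_Y) < 1 for all Y ≠ Y* and det(B_{Y*}ᵀ B_{Y*}) = 1, the joint maximizer of Q(o,a) = ∑_i Q_i(o_i,a_i) + log det(B_Yᵀ B_Y) is achieved at a* = (argmax_{a_i} Q_i(o_i,a_i))_i; i.e., argmax_a Q(o,a) = a* (IGM condition). -/
open scoped RealInnerProductSpace

/-- IGM condition: under the Q-DPP decomposition with Gram determinant `< 1` for every
action profile other than `a*` and `= 1` at `a*`, and with `a*` the profile of the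
(unique) individual maximizers, the joint value `Q(a) = ∑ᵢ Qᵢ(aᵢ) + log det(B_aᵀ B_a)`
is uniquely maximized at `a*`. -/
theorem igm_condition_recovery
    (N P : ℕ) (A : Type) [Fintype A] [Nonempty A]
    (Qi : Fin N → A → ℝ) (b : (Fin N → A) → Fin N → EuclideanSpace ℝ (Fin P))
    (hb : ∀ a i, ‖b a i‖ ≤ 1)
    (Q : (Fin N → A) → ℝ)
    (hQ : ∀ a, Q a = ∑ i, Qi i (a i) +
        Real.log (Matrix.of fun i j : Fin N => ⟪b a i, b a j⟫).det)
    (astar : Fin N → A)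
    (hastar : ∀ i a, a ≠ astar i → Qi i a < Qi i (astar i))
    (hdet1 : (Matrix.of fun i j : Fin N => ⟪b astar i, b astar j⟫).det = 1)
    (hdetlt : ∀ a, a ≠ astar →
        (Matrix.of fun i j : Fin N => ⟪b a i, b a j⟫).det < 1) :
    ∀ a, a ≠ astar → Q a < Q astar := by
  intro a ha
  -- Gram matrix is positive semidefinite, hence det ≥ 0
  have hgram : (Matrix.of fun i j : Fin N => ⟪b a i, b a j⟫) =
      (Matrix.of fun (k : Fin P) (i : Fin N) => b a i k).conjTranspose *
      (Matrix.of fun (k : Fin P) (i : Fin N) => b a i k) := by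
    ext i j
    simp [Matrix.mul_apply, Matrix.conjTranspose_apply, PiLp.inner_apply,
      RCLike.inner_apply, mul_comm]
  have hdetnn : 0 ≤ (Matrix.of fun i j : Fin N => ⟪b a i, b a j⟫).det := by
    rw [hgram]
    have hps := Matrix.posSemidef_conjTranspose_mul_self
      (Matrix.of fun (k : Fin P) (i : Fin N) => b a i k)
    rw [hps.1.det_eq_prod_eigenvalues]
    apply Finset.prod_nonneg
    intro i _
    simpa using hps.eigenvalues_nonneg i
  have hlog : Real.log (Matrix.of fun i j : Fin N => ⟪b a i, b a j⟫).det ≤ 0 :=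
    Real.log_nonpos hdetnn (le_of_lt (hdetlt a ha))
  have hsum : ∑ i, Qi i (a i) < ∑ i, Qi i (astar i) := by
    obtain ⟨i, hi⟩ := Function.ne_iff.mp ha
    refine Finset.sum_lt_sum (fun j _ => ?_) ⟨i, Finset.mem_univ i, hastar i (a i) hi⟩
    by_cases h : a j = astar j
    · rw [h]
    · exact (hastar j (a j) h).le
  rw [hQ a, hQ astar, hdet1, Real.log_one, add_zero]
  calc ∑ i, Qi i (a i) + Real.log (Matrix.of fun i j : Fin N => ⟪b a i, b a j⟫).det
      ≤ ∑ i, Qi i (a i) := by linarith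
    _ < ∑ i, Qi i (astar i) := hsum
end

section
/- Eckart–Young–Mirsky (Frobenius norm, error formula): For W ∈ ℝ^{M×P} with M ≥ P and SVD W = UΣVᵀ with singular values σ_1 ≥ ... ≥ σ_P, the rank-k truncation W^k = ∑_{i=1}^k σ_i u_i v_iᵀ minimizes ‖W − W'‖_F over all matrices W' of rank ≤ k, and the minimum equals ∑_{i=k+1}^P σ_i². -/
open Matrix Finset

/-- Expansion of a squared sum against an orthonormal family. -/
lemma ortho_expand {N Q : ℕ} (S : Finset (Fin Q)) (x : Fin Q → ℝ) (u : Fin Q → Fin N → ℝ)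
    (hu : ∀ i j, ∑ a, u i a * u j a = if i = j then 1 else 0) :
    ∑ a, (∑ i ∈ S, x i * u i a) ^ 2 = ∑ i ∈ S, x i ^ 2 := by
  simp_rw [sq, Finset.sum_mul_sum]
  rw [Finset.sum_comm]
  refine Finset.sum_congr rfl fun i hi => ?_
  rw [Finset.sum_comm]
  have : ∀ j ∈ S, ∑ a, (x i * u i a) * (x j * u j a)
      = (x i * x j) * ∑ a, u i a * u j a := by
    intro j _
    rw [Finset.mul_sum]
    exact Finset.sum_congr rfl fun a _ => by ring
  rw [Finset.sum_congr rfl this]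
  simp_rw [hu]
  simp [Finset.sum_ite_eq, hi]

/-- Bessel's inequality, concretely. -/
lemma bessel_concrete {m P : ℕ} (w : Fin m → Fin P → ℝ)
    (hw : ∀ j l, ∑ b, w j b * w l b = if j = l then 1 else 0)
    (x : Fin P → ℝ) :
    ∑ j, (∑ b, x b * w j b) ^ 2 ≤ ∑ b, x b ^ 2 := by
  set t : Fin m → ℝ := fun j => ∑ b, x b * w j b with ht
  have h0 : (0:ℝ) ≤ ∑ b, (x b - ∑ j, t j * w j b) ^ 2 :=
    Finset.sum_nonneg fun _ _ => sq_nonneg _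
  have h1 : ∑ b, x b * (∑ j, t j * w j b) = ∑ j, t j ^ 2 := by
    simp_rw [Finset.mul_sum]
    rw [Finset.sum_comm]
    refine Finset.sum_congr rfl fun j _ => ?_
    have : ∀ b ∈ (Finset.univ : Finset (Fin P)), x b * (t j * w j b) = t j * (x b * w j b) := by
      intro b _; ring
    rw [Finset.sum_congr rfl this, ← Finset.mul_sum,
      show (∑ b, x b * w j b) = t j from rfl, sq]
  have h2 : ∑ b, (∑ j, t j * w j b) ^ 2 = ∑ j, t j ^ 2 := by
    have := ortho_expand (N := P) (Q := m) Finset.univ t w hw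
    simpa using this
  have h3 : ∑ b, (x b - ∑ j, t j * w j b) ^ 2
      = ∑ b, x b ^ 2 - 2 * (∑ b, x b * (∑ j, t j * w j b)) + ∑ b, (∑ j, t j * w j b) ^ 2 := by
    rw [Finset.mul_sum, ← Finset.sum_sub_distrib, ← Finset.sum_add_distrib]
    exact Finset.sum_congr rfl fun b _ => by ring
  rw [h3, h1, h2] at h0
  linarith


/-- Abel-type weight bound: antitone nonneg weights vs. fractional selection. -/
lemma weight_bound {P k : ℕ} (σ : Fin P → ℝ) (hσ0 : ∀ i, 0 ≤ σ i) (hσanti : Antitone σ)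
    (c : Fin P → ℝ) (hc0 : ∀ i, 0 ≤ c i) (hc1 : ∀ i, c i ≤ 1)
    (hcs : (P : ℝ) - k ≤ ∑ i, c i) :
    ∑ i ∈ Finset.univ.filter (fun i : Fin P => k ≤ (i : ℕ)), σ i ^ 2
      ≤ ∑ i, σ i ^ 2 * c i := by
  by_cases hkP : k < P
  · set κ : Fin P := ⟨k, hkP⟩ with hκ
    set t : ℝ := σ κ ^ 2 with htdef
    have ht0 : (0:ℝ) ≤ t := sq_nonneg _
    set B := Finset.univ.filter (fun i : Fin P => k ≤ (i : ℕ)) with hB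
    set A := Finset.univ.filter (fun i : Fin P => ¬ k ≤ (i : ℕ)) with hA
    have hsplit : ∑ i, σ i ^ 2 * c i = (∑ i ∈ B, σ i ^ 2 * c i) + ∑ i ∈ A, σ i ^ 2 * c i :=
      (Finset.sum_filter_add_sum_filter_not Finset.univ _ _).symm
    have hsplitc : ∑ i, c i = (∑ i ∈ B, c i) + ∑ i ∈ A, c i :=
      (Finset.sum_filter_add_sum_filter_not Finset.univ _ _).symm
    have hcardB : (B.card : ℝ) = (P : ℝ) - k := by
      have hBI : B = Finset.Ici κ := by
        ext i
        simp [hB, Finset.mem_Ici, Fin.le_def, hκ]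
      rw [hBI, Fin.card_Ici, Nat.cast_sub hkP.le]
    have hBbig : ∀ i ∈ B, σ i ^ 2 ≤ t := by
      intro i hi
      have hki : κ ≤ i := by
        rw [hB] at hi
        simp only [Finset.mem_filter] at hi
        exact hi.2
      have := hσanti hki
      nlinarith [hσ0 i, hσ0 κ]
    have hAsmall : ∀ i ∈ A, t ≤ σ i ^ 2 := by
      intro i hi
      have hik : i ≤ κ := by
        rw [hA] at hi
        simp only [Finset.mem_filter, not_le] at hi
        exact le_of_lt hi.2
      have := hσanti hik
      nlinarith [hσ0 i, hσ0 κ]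
    have h1 : ∑ i ∈ B, σ i ^ 2 * (1 - c i) ≤ t * ∑ i ∈ B, (1 - c i) := by
      rw [Finset.mul_sum]
      refine Finset.sum_le_sum fun i hi => ?_
      have h := hBbig i hi
      have := hc1 i
      nlinarith
    have h2 : t * ∑ i ∈ A, c i ≤ ∑ i ∈ A, σ i ^ 2 * c i := by
      rw [Finset.mul_sum]
      refine Finset.sum_le_sum fun i hi => ?_
      have h := hAsmall i hi
      have := hc0 i
      nlinarith
    have h3 : ∑ i ∈ B, (1 - c i) ≤ ∑ i ∈ A, c i := by
      rw [Finset.sum_sub_distrib, Finset.sum_const, nsmul_eq_mul, mul_one]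
      have : (∑ i ∈ A, c i) = ∑ i, c i - ∑ i ∈ B, c i := by rw [hsplitc]; ring
      rw [this, hcardB]
      linarith
    have h4 : t * ∑ i ∈ B, (1 - c i) ≤ t * ∑ i ∈ A, c i :=
      mul_le_mul_of_nonneg_left h3 ht0
    have h5 : ∑ i ∈ B, σ i ^ 2 = ∑ i ∈ B, σ i ^ 2 * c i + ∑ i ∈ B, σ i ^ 2 * (1 - c i) := by
      rw [← Finset.sum_add_distrib]
      exact Finset.sum_congr rfl fun i _ => by ring
    rw [hsplit]
    linarith
  · have hempty : Finset.univ.filter (fun i : Fin P => k ≤ (i : ℕ)) = ∅ := by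
      ext i
      simp only [Finset.mem_filter, Finset.mem_univ, true_and, Finset.notMem_empty, iff_false]
      have := i.isLt
      omega
    rw [hempty]
    simp only [Finset.sum_empty]
    exact Finset.sum_nonneg fun i _ => mul_nonneg (sq_nonneg _) (hc0 i)

set_option maxHeartbeats 1000000 in
/-- Eckart–Young–Mirsky (Frobenius norm): given an SVD `W = ∑ᵢ σᵢ uᵢ vᵢᵀ` with
`σ₁ ≥ … ≥ σ_P ≥ 0` and orthonormal families `uᵢ`, `vᵢ`, the rank-`k` truncation
`W^k = ∑_{i<k} σᵢ uᵢ vᵢᵀ` minimizes the Frobenius distance to `W` over all matrices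
of rank at most `k`, and the minimal squared error equals `∑_{i≥k} σᵢ²`. -/
theorem eckart_young_mirsky
    (M P k : ℕ) (hPM : P ≤ M) (hk : k ≤ P)
    (σ : Fin P → ℝ) (hσ0 : ∀ i, 0 ≤ σ i) (hσanti : Antitone σ)
    (u : Fin P → Fin M → ℝ) (v : Fin P → Fin P → ℝ)
    (hu : ∀ i j, ∑ a, u i a * u j a = if i = j then 1 else 0)
    (hv : ∀ i j, ∑ a, v i a * v j a = if i = j then 1 else 0)
    (W Wk : Matrix (Fin M) (Fin P) ℝ)
    (hW : ∀ a b, W a b = ∑ i, σ i * u i a * v i b)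
    (hWk : ∀ a b, Wk a b =
        ∑ i ∈ Finset.univ.filter (fun i : Fin P => (i : ℕ) < k), σ i * u i a * v i b) :
    (∀ W' : Matrix (Fin M) (Fin P) ℝ, W'.rank ≤ k →
        ∑ a, ∑ b, (W a b - Wk a b) ^ 2 ≤ ∑ a, ∑ b, (W a b - W' a b) ^ 2) ∧
      ∑ a, ∑ b, (W a b - Wk a b) ^ 2
        = ∑ i ∈ Finset.univ.filter (fun i : Fin P => k ≤ (i : ℕ)), σ i ^ 2 := by
  -- the "tail" index set
  set S : Finset (Fin P) := Finset.univ.filter (fun i : Fin P => k ≤ (i : ℕ)) with hS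
  -- difference entries
  have hG : ∀ a b, W a b - Wk a b = ∑ i ∈ S, σ i * u i a * v i b := by
    intro a b
    rw [hW, hWk]
    rw [← Finset.sum_filter_add_sum_filter_not Finset.univ (fun i : Fin P => (i:ℕ) < k)]
    simp only [not_lt, hS]
    ring
  -- equality part
  have heq : ∑ a, ∑ b, (W a b - Wk a b) ^ 2 = ∑ i ∈ S, σ i ^ 2 := by
    have hb : ∀ a, ∑ b, (W a b - Wk a b) ^ 2 = ∑ i ∈ S, (σ i * u i a) ^ 2 := by
      intro a
      calc ∑ b, (W a b - Wk a b) ^ 2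
          = ∑ b, (∑ i ∈ S, (σ i * u i a) * v i b) ^ 2 := by
            refine Finset.sum_congr rfl fun b _ => ?_
            rw [hG a b]
        _ = ∑ i ∈ S, (σ i * u i a) ^ 2 := ortho_expand S _ v hv
    calc ∑ a, ∑ b, (W a b - Wk a b) ^ 2 = ∑ a, ∑ i ∈ S, (σ i * u i a) ^ 2 :=
          Finset.sum_congr rfl fun a _ => hb a
      _ = ∑ i ∈ S, ∑ a, (σ i * u i a) ^ 2 := Finset.sum_comm
      _ = ∑ i ∈ S, σ i ^ 2 := by
          refine Finset.sum_congr rfl fun i _ => ?_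
          have : ∀ a ∈ (Finset.univ : Finset (Fin M)), (σ i * u i a) ^ 2
              = σ i ^ 2 * (u i a * u i a) := fun a _ => by ring
          rw [Finset.sum_congr rfl this, ← Finset.mul_sum, hu i i]
          simp
  refine ⟨?_, heq⟩
  intro W' hrk
  rw [heq]
  classical
  -- transposed orthonormality of the full basis v
  have hv' : ∀ a b : Fin P, ∑ i, v i a * v i b = if a = b then 1 else 0 := by
    have hVVt : (Matrix.of v) * (Matrix.of v)ᵀ = 1 := by
      ext i j
      simpa [Matrix.mul_apply, Matrix.one_apply] using hv i j
    have hVtV : (Matrix.of v)ᵀ * (Matrix.of v) = 1 := mul_eq_one_comm.mp hVVt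
    intro a b
    have h := Matrix.ext_iff.mpr hVtV a b
    simpa [Matrix.mul_apply, Matrix.one_apply] using h
  -- kernel of W' as a subspace of Euclidean space
  have hrank : W'.rank = Module.finrank ℝ (LinearMap.range (Matrix.toEuclideanLin (𝕜 := ℝ) W')) := by
    rw [Matrix.toEuclideanLin_eq_toLin]
    exact W'.rank_eq_finrank_range_toLin _ _
  set K : Submodule ℝ (EuclideanSpace ℝ (Fin P)) :=
    LinearMap.ker (Matrix.toEuclideanLin (𝕜 := ℝ) W') with hKdef
  set m := Module.finrank ℝ K with hmdef
  have hrn := LinearMap.finrank_range_add_finrank_ker (Matrix.toEuclideanLin (𝕜 := ℝ) W')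
  rw [finrank_euclideanSpace, Fintype.card_fin] at hrn
  have hmP : (P : ℝ) - k ≤ (m : ℝ) := by
    have h1 : Module.finrank ℝ (LinearMap.range (Matrix.toEuclideanLin (𝕜 := ℝ) W')) ≤ k :=
      hrank ▸ hrk
    have h2 : P ≤ k + m := by
      rw [hmdef, hKdef]
      omega
    have := (Nat.cast_le (α := ℝ)).mpr h2
    push_cast at this
    linarith
  -- an orthonormal basis of the kernel
  let BO := stdOrthonormalBasis ℝ K
  let w : Fin m → Fin P → ℝ := fun j b => ((BO j : EuclideanSpace ℝ (Fin P)) : Fin P → ℝ) b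
  have hw : ∀ j l, ∑ b, w j b * w l b = if j = l then 1 else 0 := by
    intro j l
    have h := orthonormal_iff_ite.mp BO.orthonormal j l
    rw [Submodule.coe_inner, PiLp.inner_apply] at h
    simp [RCLike.inner_apply, starRingEnd_apply] at h
    rw [← h]
    exact Finset.sum_congr rfl fun b _ => mul_comm _ _
  have hker : ∀ j (a : Fin M), ∑ b, W' a b * w j b = 0 := by
    intro j a
    have h0 : Matrix.toEuclideanLin (𝕜 := ℝ) W' (BO j : EuclideanSpace ℝ (Fin P)) = 0 :=
      LinearMap.mem_ker.mp (BO j).2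
    have h1 : W' *ᵥ (w j) = 0 := congrArg WithLp.ofLp h0
    exact congrFun h1 a
  -- the weights
  set c : Fin P → ℝ := fun i => ∑ j, (∑ b, v i b * w j b) ^ 2 with hcdef
  have hc0 : ∀ i, 0 ≤ c i := fun i => Finset.sum_nonneg fun j _ => sq_nonneg _
  have hc1 : ∀ i, c i ≤ 1 := by
    intro i
    have h := bessel_concrete w hw (v i)
    have h2 : ∑ b, v i b ^ 2 = 1 := by
      have := hv i i
      simp at this
      rw [← this]
      exact Finset.sum_congr rfl fun b _ => by rw [pow_two]
    rw [h2] at h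
    exact h
  have hcsum : ∑ i, c i = (m : ℝ) := by
    rw [hcdef]
    rw [Finset.sum_comm]
    have hj : ∀ j, ∑ i, (∑ b, v i b * w j b) ^ 2 = 1 := by
      intro j
      have hpar := ortho_expand (N := P) (Q := P) Finset.univ (w j) (fun b i => v i b) hv'
      have e1 : ∑ i, (∑ b, v i b * w j b) ^ 2 = ∑ i, (∑ b, w j b * v i b) ^ 2 := by
        refine Finset.sum_congr rfl fun i _ => ?_
        congr 1
        exact Finset.sum_congr rfl fun b _ => mul_comm _ _
      rw [e1, hpar]
      have := hw j j
      simp at this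
      rw [← this]
      exact Finset.sum_congr rfl fun b _ => by rw [pow_two]
    rw [Finset.sum_congr rfl fun j _ => hj j]
    simp
  -- Bessel per row
  have step1 : ∑ a, ∑ j, (∑ b, (W a b - W' a b) * w j b) ^ 2
      ≤ ∑ a, ∑ b, (W a b - W' a b) ^ 2 :=
    Finset.sum_le_sum fun a _ => bessel_concrete w hw _
  -- compute the inner sums
  have step2 : ∀ (a : Fin M) j, (∑ b, (W a b - W' a b) * w j b)
      = ∑ i, (σ i * (∑ b, v i b * w j b)) * u i a := by
    intro a j
    have e0 : ∑ b, (W a b - W' a b) * w j b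
        = (∑ b, W a b * w j b) - ∑ b, W' a b * w j b := by
      rw [← Finset.sum_sub_distrib]
      exact Finset.sum_congr rfl fun b _ => by ring
    rw [e0, hker j a, sub_zero]
    calc ∑ b, W a b * w j b = ∑ b, ∑ i, (σ i * u i a * v i b) * w j b := by
          refine Finset.sum_congr rfl fun b _ => ?_
          rw [hW a b, Finset.sum_mul]
      _ = ∑ i, ∑ b, (σ i * u i a * v i b) * w j b := Finset.sum_comm
      _ = ∑ i, (σ i * (∑ b, v i b * w j b)) * u i a := by
          refine Finset.sum_congr rfl fun i _ => ?_
          rw [Finset.mul_sum, Finset.sum_mul]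
          exact Finset.sum_congr rfl fun b _ => by ring
  have step3 : ∑ a, ∑ j, (∑ b, (W a b - W' a b) * w j b) ^ 2 = ∑ i, σ i ^ 2 * c i := by
    rw [Finset.sum_comm]
    calc ∑ j, ∑ a, (∑ b, (W a b - W' a b) * w j b) ^ 2
        = ∑ j, ∑ a, (∑ i, (σ i * (∑ b, v i b * w j b)) * u i a) ^ 2 := by
          exact Finset.sum_congr rfl fun j _ => Finset.sum_congr rfl fun a _ => by rw [step2 a j]
      _ = ∑ j, ∑ i, (σ i * (∑ b, v i b * w j b)) ^ 2 := by
          refine Finset.sum_congr rfl fun j _ => ?_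
          have := ortho_expand (N := M) (Q := P) Finset.univ
            (fun i => σ i * (∑ b, v i b * w j b)) u hu
          simpa using this
      _ = ∑ i, ∑ j, (σ i * (∑ b, v i b * w j b)) ^ 2 := Finset.sum_comm
      _ = ∑ i, σ i ^ 2 * c i := by
          refine Finset.sum_congr rfl fun i _ => ?_
          rw [hcdef, Finset.mul_sum]
          exact Finset.sum_congr rfl fun j _ => by ring
  have hwb := weight_bound σ hσ0 hσanti c hc0 hc1 (by rw [hcsum]; exact hmP)
  calc ∑ i ∈ S, σ i ^ 2 ≤ ∑ i, σ i ^ 2 * c i := by rw [hS]; exact hwb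
    _ = ∑ a, ∑ j, (∑ b, (W a b - W' a b) * w j b) ^ 2 := step3.symm
    _ ≤ ∑ a, ∑ b, (W a b - W' a b) ^ 2 := step1
end

section
/- Lower bound on the sampler's normalizer: Under the singular-value constraint min_i σ̂_{i,j}² ≥ δ σ_j² for all j, the product over sampling steps of the total projected squared mass, ∏_{i=1}^N (∑_{r ∈ G_{π(i)}} ‖proj_{U_i^⊥}(w_r)‖²), is at least δ^N · ∑_{k_1<...<k_N} σ_{k_1}²···σ_{k_N}², where U_i is the span of the first i−1 selected rows and π is the order of partitions visited. -/
open scoped RealInnerProductSpace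

lemma euclid_inner {P : ℕ} (x y : EuclideanSpace ℝ (Fin P)) :
    ⟪x, y⟫ = ∑ p, x p * y p := by
  simp [PiLp.inner_apply, RCLike.inner_apply, mul_comm]

lemma toEuclideanLin_coord {P : ℕ} (A : Matrix (Fin P) (Fin P) ℝ)
    (x : EuclideanSpace ℝ (Fin P)) (p : Fin P) :
    Matrix.toEuclideanLin A x p = ∑ q, A p q * x q := by
  rw [Matrix.toEuclideanLin_apply]
  rfl

lemma quadform_rows {M P : ℕ} (w : Fin M → EuclideanSpace ℝ (Fin P)) (G : Finset (Fin M))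
    (A : Matrix (Fin P) (Fin P) ℝ) (hAe : ∀ p q, A p q = ∑ a ∈ G, w a p * w a q)
    (x : EuclideanSpace ℝ (Fin P)) :
    ⟪x, Matrix.toEuclideanLin A x⟫ = ∑ r ∈ G, ⟪x, w r⟫ ^ 2 := by
  calc ⟪x, Matrix.toEuclideanLin A x⟫
      = ∑ p, ∑ q, ∑ a ∈ G, x p * (w a p * w a q * x q) := by
        rw [euclid_inner]
        refine Finset.sum_congr rfl fun p _ => ?_
        rw [toEuclideanLin_coord, Finset.mul_sum]
        refine Finset.sum_congr rfl fun q _ => ?_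
        rw [hAe, Finset.sum_mul, Finset.mul_sum]
    _ = ∑ p, ∑ a ∈ G, ∑ q, x p * (w a p * w a q * x q) :=
        Finset.sum_congr rfl fun p _ => Finset.sum_comm
    _ = ∑ a ∈ G, ∑ p, ∑ q, x p * (w a p * w a q * x q) := Finset.sum_comm
    _ = ∑ r ∈ G, ⟪x, w r⟫ ^ 2 := by
        refine Finset.sum_congr rfl fun r _ => ?_
        rw [euclid_inner, sq, Finset.sum_mul_sum]
        exact Finset.sum_congr rfl fun p _ => Finset.sum_congr rfl fun q _ => by ring

lemma toEuclideanLin_eigenBasis {P : ℕ} (A : Matrix (Fin P) (Fin P) ℝ)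
    (hA : A.IsHermitian) (j : Fin P) :
    Matrix.toEuclideanLin A (hA.eigenvectorBasis j) =
      hA.eigenvalues j • hA.eigenvectorBasis j := by
  have h := hA.mulVec_eigenvectorBasis j
  ext p
  rw [toEuclideanLin_coord]
  have := congrFun h p
  simpa [Matrix.mulVec, dotProduct] using this

lemma quadform_eigen {P : ℕ} (A : Matrix (Fin P) (Fin P) ℝ) (hA : A.IsHermitian)
    (x : EuclideanSpace ℝ (Fin P)) :
    ⟪x, Matrix.toEuclideanLin A x⟫ =
      ∑ j, hA.eigenvalues j * ⟪hA.eigenvectorBasis j, x⟫ ^ 2 := by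
  set v := hA.eigenvectorBasis with hv
  have hfx : Matrix.toEuclideanLin A x
      = ∑ j, (hA.eigenvalues j * ⟪v j, x⟫) • v j := by
    conv_lhs => rw [← v.sum_repr' x]
    rw [map_sum]
    refine Finset.sum_congr rfl fun j _ => ?_
    rw [map_smul, toEuclideanLin_eigenBasis A hA j, smul_smul, mul_comm]
  rw [hfx, inner_sum]
  refine Finset.sum_congr rfl fun j _ => ?_
  rw [real_inner_smul_right, sq, real_inner_comm]
  ring

lemma onb_parseval {E' : Type*} [NormedAddCommGroup E'] [InnerProductSpace ℝ E']
    {ι : Type*} [Fintype ι] (v : OrthonormalBasis ι ℝ E') (x : E') :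
    ∑ j, ⟪v j, x⟫ ^ 2 = ‖x‖ ^ 2 := by
  have h := v.sum_inner_mul_inner x x
  rw [real_inner_self_eq_norm_sq] at h
  rw [← h]
  exact Finset.sum_congr rfl fun j _ => by rw [sq, real_inner_comm x (v j)]

lemma weight_bound_s19 {P : ℕ} (μ c : Fin P → ℝ) (hμ0 : ∀ j, 0 ≤ μ j)
    (hμa : Antitone μ)
    (hc0 : ∀ j, 0 ≤ c j) (hc1 : ∀ j, c j ≤ 1) (d : ℕ) (hdP : d ≤ P)
    (hcd : ∑ j, c j ≤ d) :
    ∑ j, μ j * c j ≤ ∑ j ∈ Finset.univ.filter (fun j : Fin P => (j : ℕ) < d), μ j := by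
  classical
  set m : ℝ := if h : d < P then μ ⟨d, h⟩ else 0 with hm
  have hm0 : 0 ≤ m := by
    rw [hm]; split
    · exact hμ0 _
    · exact le_rfl
  have hcard : (Finset.univ.filter (fun j : Fin P => (j : ℕ) < d)).card = d := by
    have himg : Finset.univ.filter (fun j : Fin P => (j : ℕ) < d)
        = Finset.map (Fin.castLEEmb hdP) Finset.univ := by
      ext j
      simp only [Finset.mem_filter, Finset.mem_univ, true_and, Finset.mem_map]
      constructor
      · intro hj
        exact ⟨⟨(j : ℕ), hj⟩, rfl⟩
      · rintro ⟨k, rfl⟩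
        exact k.isLt
    rw [himg, Finset.card_map, Finset.card_univ, Fintype.card_fin]
  have h1 : ∀ j ∈ Finset.univ.filter (fun j : Fin P => (j : ℕ) < d),
      μ j * c j ≤ μ j + (m * c j - m) := by
    intro j hj
    have hjd : (j : ℕ) < d := (Finset.mem_filter.mp hj).2
    have hmj : m ≤ μ j := by
      rw [hm]; split
      · next h => exact hμa (by simp [Fin.le_def]; omega)
      · exact hμ0 j
    nlinarith [hc1 j, hc0 j]
  have h2 : ∀ j ∈ Finset.univ.filter (fun j : Fin P => ¬ (j : ℕ) < d),
      μ j * c j ≤ m * c j := by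
    intro j hj
    have hjd : d ≤ (j : ℕ) := by
      have := (Finset.mem_filter.mp hj).2; omega
    have hdP' : d < P := lt_of_le_of_lt hjd j.isLt
    have hmj : μ j ≤ m := by
      rw [hm, dif_pos hdP']
      exact hμa (by simp [Fin.le_def]; omega)
    exact mul_le_mul_of_nonneg_right hmj (hc0 j)
  calc ∑ j, μ j * c j
      = ∑ j ∈ Finset.univ.filter (fun j : Fin P => (j : ℕ) < d), μ j * c j
        + ∑ j ∈ Finset.univ.filter (fun j : Fin P => ¬ (j : ℕ) < d), μ j * c j :=
        (Finset.sum_filter_add_sum_filter_not _ _ _).symm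
    _ ≤ (∑ j ∈ Finset.univ.filter (fun j : Fin P => (j : ℕ) < d), (μ j + (m * c j - m)))
        + ∑ j ∈ Finset.univ.filter (fun j : Fin P => ¬ (j : ℕ) < d), m * c j :=
        add_le_add (Finset.sum_le_sum h1) (Finset.sum_le_sum h2)
    _ = ∑ j ∈ Finset.univ.filter (fun j : Fin P => (j : ℕ) < d), μ j
        + (m * ((∑ j ∈ Finset.univ.filter (fun j : Fin P => (j : ℕ) < d), c j)
            + ∑ j ∈ Finset.univ.filter (fun j : Fin P => ¬ (j : ℕ) < d), c j) - m * d) := by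
        rw [Finset.sum_add_distrib, Finset.sum_sub_distrib, ← Finset.mul_sum, ← Finset.mul_sum,
          Finset.sum_const, hcard, nsmul_eq_mul]
        ring
    _ = ∑ j ∈ Finset.univ.filter (fun j : Fin P => (j : ℕ) < d), μ j
        + (m * ∑ j, c j - m * d) := by
        rw [Finset.sum_filter_add_sum_filter_not]
    _ ≤ ∑ j ∈ Finset.univ.filter (fun j : Fin P => (j : ℕ) < d), μ j := by
        nlinarith

lemma step_bound {M P : ℕ} (w : Fin M → EuclideanSpace ℝ (Fin P)) (G : Finset (Fin M))
    (A : Matrix (Fin P) (Fin P) ℝ) (hA : A.IsHermitian)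
    (hAe : ∀ p q, A p q = ∑ a ∈ G, w a p * w a q)
    (μ : Fin P → ℝ) (hμ0 : ∀ j, 0 ≤ μ j) (hμa : Antitone μ)
    (e : Equiv.Perm (Fin P)) (he : ∀ j, hA.eigenvalues (e j) = μ j)
    (U : Submodule ℝ (EuclideanSpace ℝ (Fin P))) (d : ℕ) (hd : Module.finrank ℝ U ≤ d)
    (hdP : d ≤ P) :
    ∑ j ∈ Finset.univ.filter (fun j : Fin P => d ≤ (j : ℕ)), μ j
      ≤ ∑ r ∈ G, ‖(Submodule.orthogonalProjection Uᗮ (w r) : EuclideanSpace ℝ (Fin P))‖ ^ 2 := by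
  classical
  set v := hA.eigenvectorBasis with hv
  set b := stdOrthonormalBasis ℝ U with hb
  -- orthonormality of the coerced basis of U
  have hbo : Orthonormal ℝ (fun l => ((b l : U) : EuclideanSpace ℝ (Fin P))) := by
    constructor
    · intro l
      exact b.orthonormal.1 l
    · intro l l' h
      rw [← Submodule.coe_inner]
      exact b.orthonormal.2 h
  -- squared norm of orthogonal projection onto U via the basis b
  have hprojU : ∀ x : EuclideanSpace ℝ (Fin P),
      ‖(Submodule.orthogonalProjection U x : EuclideanSpace ℝ (Fin P))‖ ^ 2
        = ∑ l, ⟪((b l : U) : EuclideanSpace ℝ (Fin P)), x⟫ ^ 2 := by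
    intro x
    have h1 : ‖(Submodule.orthogonalProjection U x : EuclideanSpace ℝ (Fin P))‖
        = ‖Submodule.orthogonalProjection U x‖ := rfl
    rw [h1, ← onb_parseval b (Submodule.orthogonalProjection U x)]
    refine Finset.sum_congr rfl fun l _ => ?_
    congr 1
    exact Submodule.inner_orthogonalProjection_eq_of_mem_left (K := U) (b l) x
  -- Pythagoras for each row
  have hpyth : ∀ r : Fin M, ‖(Submodule.orthogonalProjection Uᗮ (w r) : EuclideanSpace ℝ (Fin P))‖ ^ 2
      = ‖w r‖ ^ 2 - ∑ l, ⟪((b l : U) : EuclideanSpace ℝ (Fin P)), w r⟫ ^ 2 := by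
    intro r
    have h0 := Submodule.norm_sq_eq_add_norm_sq_projection (w r) U
    have e1 : ‖(Submodule.orthogonalProjection U (w r) : EuclideanSpace ℝ (Fin P))‖
        = ‖Submodule.orthogonalProjection U (w r)‖ := rfl
    have e2 : ‖(Submodule.orthogonalProjection Uᗮ (w r) : EuclideanSpace ℝ (Fin P))‖
        = ‖Submodule.orthogonalProjection Uᗮ (w r)‖ := rfl
    have h1 := hprojU (w r)
    rw [e1] at h1
    rw [e2]
    linarith [h0, h1]
  have key : ∀ x : EuclideanSpace ℝ (Fin P),
      ∑ r ∈ G, ⟪x, w r⟫ ^ 2 = ∑ j, hA.eigenvalues j * ⟪v j, x⟫ ^ 2 := fun x =>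
    (quadform_rows w G A hAe x).symm.trans (quadform_eigen A hA x)
  have htr : ∑ r ∈ G, ‖w r‖ ^ 2 = ∑ j, μ j := by
    calc ∑ r ∈ G, ‖w r‖ ^ 2 = ∑ r ∈ G, ∑ j, ⟪v j, w r⟫ ^ 2 :=
          Finset.sum_congr rfl fun r _ => (onb_parseval v (w r)).symm
      _ = ∑ j, ∑ r ∈ G, ⟪v j, w r⟫ ^ 2 := Finset.sum_comm
      _ = ∑ j, hA.eigenvalues j := by
          refine Finset.sum_congr rfl fun j _ => ?_
          have h2 : ∑ r ∈ G, ⟪v j, w r⟫ ^ 2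
              = hA.eigenvalues j * ⟪v j, v j⟫ := by
            rw [← quadform_rows w G A hAe (v j), hv,
              toEuclideanLin_eigenBasis A hA j, real_inner_smul_right]
          rw [h2, real_inner_self_eq_norm_sq]
          simp [v.orthonormal.1 j]
      _ = ∑ j, μ j := by
          rw [← Equiv.sum_comp e hA.eigenvalues]
          exact Finset.sum_congr rfl fun j _ => he j
  set c : Fin P → ℝ :=
    fun j => ∑ l, ⟪v j, ((b l : U) : EuclideanSpace ℝ (Fin P))⟫ ^ 2 with hc
  have hQb : ∑ l, ∑ r ∈ G, ⟪((b l : U) : EuclideanSpace ℝ (Fin P)), w r⟫ ^ 2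
      = ∑ j, μ j * c (e j) := by
    calc ∑ l, ∑ r ∈ G, ⟪((b l : U) : EuclideanSpace ℝ (Fin P)), w r⟫ ^ 2
        = ∑ l, ∑ j, hA.eigenvalues j
            * ⟪v j, ((b l : U) : EuclideanSpace ℝ (Fin P))⟫ ^ 2 :=
          Finset.sum_congr rfl fun l _ => key _
      _ = ∑ j, hA.eigenvalues j * c j := by
          rw [Finset.sum_comm]
          exact Finset.sum_congr rfl fun j _ => (Finset.mul_sum _ _ _).symm
      _ = ∑ j, hA.eigenvalues (e j) * c (e j) :=
          (Equiv.sum_comp e fun j => hA.eigenvalues j * c j).symm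
      _ = ∑ j, μ j * c (e j) := Finset.sum_congr rfl fun j _ => by rw [he j]
  have hc0 : ∀ j, 0 ≤ c (e j) := fun j =>
    Finset.sum_nonneg fun l _ => sq_nonneg _
  have hc1 : ∀ j, c (e j) ≤ 1 := by
    intro j
    have hb1 := hbo.sum_inner_products_le
      (s := (Finset.univ : Finset (Fin (Module.finrank ℝ U)))) (v (e j))
    have hn : ‖v (e j)‖ = 1 := v.orthonormal.1 _
    calc c (e j) = ∑ l, ‖⟪((b l : U) : EuclideanSpace ℝ (Fin P)), v (e j)⟫‖ ^ 2 := by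
          refine Finset.sum_congr rfl fun l _ => ?_
          rw [Real.norm_eq_abs, sq_abs, real_inner_comm]
      _ ≤ ‖v (e j)‖ ^ 2 := hb1
      _ = 1 := by rw [hn]; norm_num
  have hcd : ∑ j, c (e j) ≤ (d : ℝ) := by
    have h1 : ∑ j, c (e j) = ∑ j, c j := Equiv.sum_comp e c
    have h2 : ∑ j, c j = ∑ l, ∑ j,
        ⟪v j, ((b l : U) : EuclideanSpace ℝ (Fin P))⟫ ^ 2 := Finset.sum_comm
    have h3 : ∀ l, ∑ j, ⟪v j, ((b l : U) : EuclideanSpace ℝ (Fin P))⟫ ^ 2 = 1 := by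
      intro l
      rw [onb_parseval v]
      have : ‖((b l : U) : EuclideanSpace ℝ (Fin P))‖ = 1 := hbo.1 l
      rw [this]; norm_num
    rw [h1, h2]
    calc ∑ l, ∑ j, ⟪v j, ((b l : U) : EuclideanSpace ℝ (Fin P))⟫ ^ 2
        = ∑ l : Fin (Module.finrank ℝ U), (1 : ℝ) :=
          Finset.sum_congr rfl fun l _ => h3 l
      _ = (Module.finrank ℝ U : ℝ) := by simp
      _ ≤ (d : ℝ) := by exact_mod_cast hd
  have hwb := weight_bound_s19 μ (fun j => c (e j)) hμ0 hμa hc0 hc1 d hdP hcd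
  have hfilters : ∑ j ∈ Finset.univ.filter (fun j : Fin P => d ≤ (j : ℕ)), μ j
      = ∑ j, μ j - ∑ j ∈ Finset.univ.filter (fun j : Fin P => (j : ℕ) < d), μ j := by
    have hsp := Finset.sum_filter_add_sum_filter_not Finset.univ
      (fun j : Fin P => (j : ℕ) < d) μ
    have hpv : Finset.univ.filter (fun j : Fin P => ¬ (j : ℕ) < d)
        = Finset.univ.filter (fun j : Fin P => d ≤ (j : ℕ)) := by
      apply Finset.filter_congr
      intro j _
      simp [not_lt]
    rw [hpv] at hsp
    linarith
  calc ∑ j ∈ Finset.univ.filter (fun j : Fin P => d ≤ (j : ℕ)), μ j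
      = ∑ j, μ j - ∑ j ∈ Finset.univ.filter (fun j : Fin P => (j : ℕ) < d), μ j :=
        hfilters
    _ ≤ ∑ j, μ j - ∑ j, μ j * c (e j) := by linarith
    _ = ∑ r ∈ G, ‖w r‖ ^ 2
        - ∑ r ∈ G, ∑ l, ⟪((b l : U) : EuclideanSpace ℝ (Fin P)), w r⟫ ^ 2 := by
        rw [htr, ← hQb, Finset.sum_comm]
    _ = ∑ r ∈ G, (‖w r‖ ^ 2
        - ∑ l, ⟪((b l : U) : EuclideanSpace ℝ (Fin P)), w r⟫ ^ 2) := by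
        rw [Finset.sum_sub_distrib]
    _ = ∑ r ∈ G, ‖(Submodule.orthogonalProjection Uᗮ (w r) : EuclideanSpace ℝ (Fin P))‖ ^ 2 :=
        Finset.sum_congr rfl fun r _ => (hpyth r).symm

lemma strictMono_le_apply {N P : ℕ} (f : Fin N → Fin P) (hf : StrictMono f)
    (i : Fin N) : (i : ℕ) ≤ (f i : ℕ) := by
  have h : ∀ n : ℕ, ∀ i : Fin N, (i : ℕ) = n → n ≤ (f i : ℕ) := by
    intro n
    induction n with
    | zero => intro i _; exact Nat.zero_le _
    | succ m ih =>
      intro i hi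
      have hiN := i.isLt
      have hm : m < N := by omega
      have hji : (⟨m, hm⟩ : Fin N) < i := by
        rw [Fin.lt_def]
        show m < (i : ℕ)
        omega
      have h1 := hf hji
      have h2 := ih ⟨m, hm⟩ rfl
      rw [Fin.lt_def] at h1
      omega
  exact h (i : ℕ) i rfl

lemma esymm_le_prod {P N : ℕ} (hNP : N ≤ P) (g : Fin P → ℝ) (hg : ∀ j, 0 ≤ g j) :
    ∑ S ∈ (Finset.univ : Finset (Fin P)).powersetCard N, ∏ j ∈ S, g j
      ≤ ∏ i : Fin N, ∑ j ∈ Finset.univ.filter (fun j : Fin P => (i : ℕ) ≤ (j : ℕ)), g j := by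
  classical
  rcases Nat.eq_zero_or_pos N with hN | hN
  · subst hN
    simp
  have hP : 0 < P := lt_of_lt_of_le hN hNP
  set T : Fin N → Finset (Fin P) :=
    fun i => Finset.univ.filter (fun j : Fin P => (i : ℕ) ≤ (j : ℕ)) with hT
  rw [Finset.prod_univ_sum T (fun _ j => g j)]
  set Φ : Finset (Fin P) → (Fin N → Fin P) :=
    fun S => if h : S.card = N then ⇑(S.orderEmbOfFin h) else fun _ => ⟨0, hP⟩ with hΦ
  have hΦcard : ∀ S : Finset (Fin P), S.card = N → ∀ i, Φ S i ∈ S := by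
    intro S h i
    rw [hΦ]; simp only [dif_pos h]
    exact Finset.orderEmbOfFin_mem S h i
  have hΦinj : Set.InjOn Φ
      ((Finset.univ : Finset (Fin P)).powersetCard N : Set (Finset (Fin P))) := by
    intro S hS S' hS' hss
    have hcS : S.card = N :=
      (Finset.mem_powersetCard.mp (Finset.mem_coe.mp hS)).2
    have hcS' : S'.card = N :=
      (Finset.mem_powersetCard.mp (Finset.mem_coe.mp hS')).2
    apply Finset.coe_injective
    rw [← Finset.range_orderEmbOfFin S hcS, ← Finset.range_orderEmbOfFin S' hcS']
    rw [hΦ] at hss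
    simp only [dif_pos hcS, dif_pos hcS'] at hss
    rw [hss]
  -- rewrite the esymm sum as a sum over the images
  have hsum : ∑ S ∈ (Finset.univ : Finset (Fin P)).powersetCard N, ∏ j ∈ S, g j
      = ∑ p ∈ ((Finset.univ : Finset (Fin P)).powersetCard N).image Φ, ∏ i : Fin N, g (p i) := by
    rw [Finset.sum_image (fun S hS S' hS' h => hΦinj (Finset.mem_coe.mpr hS) (Finset.mem_coe.mpr hS') h)]
    refine Finset.sum_congr rfl fun S hS => ?_
    have hcS : S.card = N := (Finset.mem_powersetCard.mp hS).2
    rw [hΦ]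
    simp only [dif_pos hcS]
    have himg : Finset.image (⇑(S.orderEmbOfFin hcS)) Finset.univ = S := by
      apply Finset.coe_injective
      rw [Finset.coe_image, Finset.coe_univ, Set.image_univ, Finset.range_orderEmbOfFin]
    rw [← Finset.prod_image
      (fun a _ a' _ h => (S.orderEmbOfFin hcS).injective h), himg]
  rw [hsum]
  apply Finset.sum_le_sum_of_subset_of_nonneg
  · intro p hp
    rcases Finset.mem_image.mp hp with ⟨S, hS, rfl⟩
    have hcS : S.card = N := (Finset.mem_powersetCard.mp hS).2
    rw [Fintype.mem_piFinset]
    intro i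
    rw [hT]
    simp only [Finset.mem_filter, Finset.mem_univ, true_and]
    rw [hΦ]
    simp only [dif_pos hcS]
    exact strictMono_le_apply _ (S.orderEmbOfFin hcS).strictMono i
  · intro p _ _
    exact Finset.prod_nonneg fun i _ => hg _

set_option maxHeartbeats 1000000 in
/-- Lower bound on the sampler's normalizer: under the singular-value balance condition
`σ̂_{i,j}² ≥ δ σⱼ²` (where `σⱼ` are the singular values of the full row matrix and
`σ̂_{i,j}` those of the partition submatrices), the product over sampling steps of the
total projected squared mass is at least `δ^N` times the `N`-th elementary symmetric
polynomial of the squared singular values. -/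
theorem sampler_normalizer_lower_bound
    (M P N : ℕ) (hNP : N ≤ P) (hPM : P ≤ M)
    (w : Fin M → EuclideanSpace ℝ (Fin P))
    -- partition of the rows into N groups
    (G : Fin N → Finset (Fin M))
    (hdisj : ∀ i j, i ≠ j → Disjoint (G i) (G j))
    (hcover : ∀ m : Fin M, ∃ i, m ∈ G i)
    -- Gram matrices of the full row set and of each partition
    (Afull : Matrix (Fin P) (Fin P) ℝ)
    (hAfull : ∀ p q, Afull p q = ∑ a : Fin M, w a p * w a q)
    (Ahat : Fin N → Matrix (Fin P) (Fin P) ℝ)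
    (hAhat : ∀ i p q, Ahat i p q = ∑ a ∈ G i, w a p * w a q)
    (hAfullH : Afull.IsHermitian) (hAhatH : ∀ i, (Ahat i).IsHermitian)
    -- σ and σ̂ are the (sorted) singular values: their squares list the eigenvalues
    (σ : Fin P → ℝ) (σhat : Fin N → Fin P → ℝ)
    (hσ0 : ∀ j, 0 ≤ σ j) (hσanti : Antitone σ)
    (hσhat0 : ∀ i j, 0 ≤ σhat i j) (hσhatanti : ∀ i, Antitone (σhat i))
    (hσ : ∃ e : Equiv.Perm (Fin P), ∀ j, hAfullH.eigenvalues (e j) = σ j ^ 2)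
    (hσhat : ∀ i, ∃ e : Equiv.Perm (Fin P), ∀ j, (hAhatH i).eigenvalues (e j) = σhat i j ^ 2)
    -- the balance condition
    (δ : ℝ) (hδ0 : 0 < δ) (hδ1 : δ ≤ 1)
    (hbal : ∀ i j, δ * σ j ^ 2 ≤ σhat i j ^ 2)
    -- order of visiting partitions and rows selected at each step
    (π : Equiv.Perm (Fin N)) (y : Fin N → Fin M) (hy : ∀ t, y t ∈ G (π t)) :
    δ ^ N * ∑ S ∈ (Finset.univ : Finset (Fin P)).powersetCard N, ∏ j ∈ S, σ j ^ 2
      ≤ ∏ i : Fin N, ∑ r ∈ G (π i),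
          ‖(Submodule.orthogonalProjection
              (Submodule.span ℝ ((fun t => w (y t)) '' {t | t < i}))ᗮ (w r) :
            EuclideanSpace ℝ (Fin P))‖ ^ 2 := by
  classical
  have hdim : ∀ i : Fin N, Module.finrank ℝ
      (Submodule.span ℝ ((fun t => w (y t)) '' {t | t < i})) ≤ (i : ℕ) := by
    intro i
    have hset : (fun t => w (y t)) '' {t | t < i}
        = ↑(Finset.image (fun t => w (y t)) (Finset.Iio i)) := by
      rw [Finset.coe_image, Finset.coe_Iio]
      rfl
    rw [hset]
    calc Module.finrank ℝ (Submodule.span ℝ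
          (↑(Finset.image (fun t => w (y t)) (Finset.Iio i)) : Set (EuclideanSpace ℝ (Fin P))))
        ≤ (Finset.image (fun t => w (y t)) (Finset.Iio i)).card :=
          finrank_span_finset_le_card _
      _ ≤ (Finset.Iio i).card := Finset.card_image_le
      _ = (i : ℕ) := Fin.card_Iio i
  have hT0 : ∀ i : Fin N,
      (0:ℝ) ≤ ∑ j ∈ Finset.univ.filter (fun j : Fin P => (i : ℕ) ≤ (j : ℕ)), σ j ^ 2 :=
    fun i => Finset.sum_nonneg fun j _ => sq_nonneg _
  have hstep : ∀ i : Fin N,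
      δ * ∑ j ∈ Finset.univ.filter (fun j : Fin P => (i : ℕ) ≤ (j : ℕ)), σ j ^ 2
      ≤ ∑ r ∈ G (π i),
          ‖(Submodule.orthogonalProjection
              (Submodule.span ℝ ((fun t => w (y t)) '' {t | t < i}))ᗮ (w r) :
            EuclideanSpace ℝ (Fin P))‖ ^ 2 := by
    intro i
    obtain ⟨e, he⟩ := hσhat (π i)
    have hμa : Antitone (fun j => σhat (π i) j ^ 2) := by
      intro j k hjk
      exact pow_le_pow_left₀ (hσhat0 _ _) (hσhatanti (π i) hjk) 2
    have hsb := step_bound w (G (π i)) (Ahat (π i)) (hAhatH (π i))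
      (hAhat (π i)) (fun j => σhat (π i) j ^ 2) (fun j => sq_nonneg _) hμa
      e he (Submodule.span ℝ ((fun t => w (y t)) '' {t | t < i})) (i : ℕ) (hdim i)
      (le_of_lt (lt_of_lt_of_le i.isLt hNP))
    refine le_trans ?_ hsb
    rw [Finset.mul_sum]
    exact Finset.sum_le_sum fun j _ => hbal (π i) j
  calc δ ^ N * ∑ S ∈ (Finset.univ : Finset (Fin P)).powersetCard N, ∏ j ∈ S, σ j ^ 2
      ≤ δ ^ N * ∏ i : Fin N,
          ∑ j ∈ Finset.univ.filter (fun j : Fin P => (i : ℕ) ≤ (j : ℕ)), σ j ^ 2 := by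
        apply mul_le_mul_of_nonneg_left _ (le_of_lt (pow_pos hδ0 N))
        exact esymm_le_prod hNP (fun j => σ j ^ 2) (fun j => sq_nonneg _)
    _ = ∏ i : Fin N,
          (δ * ∑ j ∈ Finset.univ.filter (fun j : Fin P => (i : ℕ) ≤ (j : ℕ)), σ j ^ 2) := by
        rw [Finset.prod_mul_distrib, Finset.prod_const, Finset.card_univ, Fintype.card_fin]
    _ ≤ ∏ i : Fin N, ∑ r ∈ G (π i),
          ‖(Submodule.orthogonalProjection
              (Submodule.span ℝ ((fun t => w (y t)) '' {t | t < i}))ᗮ (w r) :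
            EuclideanSpace ℝ (Fin P))‖ ^ 2 :=
        Finset.prod_le_prod (fun i _ => mul_nonneg (le_of_lt hδ0) (hT0 i))
          (fun i _ => hstep i)
end
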